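/- arXiv:1603.05381 — 3 statements merged into one kernel-verified Lean document; each statement's English description precedes it below -/
import Mathlib

section
/- Let Ω, Δ, Σ be finite sets with |Ω| ≥ 2, |Δ| ≥ 2, and let Γ : Δ → P(Σ) assign pairwise disjoint r-element subsets of Σ with r ≥ 2. For each (ω, ε) ∈ Ω × Δ, let Γ̂(ω, ε) be the set of functions f : Σ → Ω that are constant equal to ω on Γ(ε) and are non-constant on Γ(δ) for every δ ≠ ε. Then the sets Γ̂(ω, ε) are pairwise disjoint, nonempty, and each has cardinality |Ω|^{|Σ| - r|Δ|} · (|Ω|^r - |Ω|)^{|Δ| - 1}. -/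
/-!
Restricting `f : Sg → Om` to each block `Γ δ` and to the complement of their union is a
bijection onto a product. Under it `Γ̂(ω, ε)` becomes: the constant `ω` on `Γ ε`, one of the
`|Om| ^ r - |Om|` non-constant functions on every other block, and anything off the blocks,
which gives the count; it is positive as `r ≥ 2` and `|Om| ≥ 2`. Two sets `Γ̂(ω, ε)` with the
same `ε` differ in the value on the nonempty block `Γ ε`, and with different `ε` one of them is
constant on a block where the other is not.
-/

open Finset Function

section Restrict

variable {ι α β : Type*}

theorem Set.ncard_setOf_exists_ne [Finite α] [Nonempty α] [Finite β] :
    {g : α → β | ∃ x y, g x ≠ g y}.ncard = Nat.card β ^ Nat.card α - Nat.card β := by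
  have hconst : {g : α → β | ∃ x y, g x ≠ g y} = (Set.range (const α))ᶜ := by
    ext g
    simp only [Set.mem_ofPred_eq, Set.mem_compl_iff, Set.mem_range, not_exists]
    constructor
    · rintro ⟨x, y, hxy⟩ b rfl
      exact hxy rfl
    · intro h
      by_contra! hconst
      obtain ⟨x⟩ := ‹Nonempty α›
      exact h (g x) (funext (hconst x))
  rw [hconst, Set.ncard_compl, Set.ncard_range_of_injective const_injective, Nat.card_fun]

theorem Set.ncard_setOf_forall_restrict_mem [Fintype ι] [Fintype α] [Finite β]
    (s : ι → Finset α) (hs : Pairwise (Disjoint on s)) (A : ∀ i, Set (s i → β)) :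
    {f : α → β | ∀ i, (fun x : s i => f x) ∈ A i}.ncard =
      Nat.card β ^ (Fintype.card α - ∑ i, #(s i)) * ∏ i, (A i).ncard := by
  classical
  set U := ⋃ i, (s i : Set α)
  have hs' : Pairwise (Disjoint on fun i => (s i : Set α)) := fun _ _ h =>
    disjoint_coe.mpr (hs h)
  let e := (Equiv.piEquivPiSubtypeProd (· ∈ U) fun _ => β).trans
    ((Equiv.prodComm _ _).trans (Equiv.prodCongr (Equiv.refl _)
      (((Set.unionEqSigmaOfDisjoint hs').arrowCongr (Equiv.refl β)).trans
        (Equiv.piCurry fun _ _ => β))))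
  have he : ∀ f i, (e f).2 i = fun x : s i => f x := fun f i => rfl
  have hU : U.ncard = ∑ i, #(s i) := by
    rw [← Nat.card_coe_set_eq, Nat.card_congr (Set.unionEqSigmaOfDisjoint hs'), Nat.card_sigma]
    simp
  calc {f : α → β | ∀ i, (fun x : s i => f x) ∈ A i}.ncard
      = Nat.card {q : ((Uᶜ : Set α) → β) × ∀ i, s i → β // True ∧ ∀ i, q.2 i ∈ A i} :=
        (Nat.card_coe_set_eq _).symm.trans
          (Nat.card_congr (e.subtypeEquiv fun f => by simp only [true_and, he]; rfl))
    _ = Nat.card (((Uᶜ : Set α) → β) × ∀ i, A i) :=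
        Nat.card_congr (Equiv.subtypeProdEquivProd.trans
          (Equiv.prodCongr (Equiv.subtypeUnivEquiv fun _ => trivial) Equiv.subtypePiEquivPi))
    _ = _ := by
      rw [Nat.card_prod, Nat.card_fun, Nat.card_pi, Nat.card_coe_set_eq, Set.ncard_compl, hU,
        Nat.card_eq_fintype_card (α := α)]
      simp only [Nat.card_coe_set_eq]

end Restrict

section GammaHat

variable {Sg Om De : Type*}

def gammaHat (Γ : De → Finset Sg) (p : Om × De) : Set (Sg → Om) :=
  {f | (∀ σ ∈ Γ p.2, f σ = p.1) ∧ ∀ δ, δ ≠ p.2 → ∃ σ₁ ∈ Γ δ, ∃ σ₂ ∈ Γ δ, f σ₁ ≠ f σ₂}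

theorem disjoint_gammaHat {Γ : De → Finset Sg} (hΓ : ∀ δ, (Γ δ).Nonempty) {p q : Om × De}
    (hpq : p ≠ q) : Disjoint (gammaHat Γ p) (gammaHat Γ q) := by
  obtain ⟨ω, ε⟩ := p
  obtain ⟨ω', ε'⟩ := q
  refine Set.disjoint_left.mpr fun f ⟨hconst, _⟩ ⟨hconst', hnonconst'⟩ => ?_
  by_cases hε : ε = ε'
  · subst hε
    obtain ⟨σ, hσ⟩ := hΓ ε
    exact hpq (congrArg (·, ε) ((hconst σ hσ).symm.trans (hconst' σ hσ)))
  · obtain ⟨σ₁, h₁, σ₂, h₂, hne⟩ := hnonconst' ε hε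
    exact hne ((hconst σ₁ h₁).trans (hconst σ₂ h₂).symm)

theorem gammaHat_eq_setOf_forall_restrict_mem [DecidableEq De] (Γ : De → Finset Sg) (ω : Om)
    (ε : De) :
    gammaHat Γ (ω, ε) = {f | ∀ δ, (fun x : Γ δ => f x) ∈
      if δ = ε then {const _ ω} else {g | ∃ x y, g x ≠ g y}} := by
  ext f
  simp only [gammaHat, Set.mem_ofPred_eq]
  constructor
  · rintro ⟨hconst, hnonconst⟩ δ
    split_ifs with hδ
    · subst hδ
      exact funext fun x => hconst x x.2
    · obtain ⟨σ₁, h₁, σ₂, h₂, hne⟩ := hnonconst δ hδ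
      exact ⟨⟨σ₁, h₁⟩, ⟨σ₂, h₂⟩, hne⟩
  · intro h
    refine ⟨fun σ hσ => ?_, fun δ hδ => ?_⟩
    · have hε := h ε
      rw [if_pos rfl] at hε
      exact congrFun hε ⟨σ, hσ⟩
    · have hδ' := h δ
      rw [if_neg hδ] at hδ'
      obtain ⟨⟨σ₁, h₁⟩, ⟨σ₂, h₂⟩, hne⟩ := hδ'
      exact ⟨σ₁, h₁, σ₂, h₂, hne⟩

theorem ncard_gammaHat [Fintype Sg] [Fintype Om] [Fintype De] {Γ : De → Finset Sg} {r : ℕ}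
    (hr : 0 < r) (hdisj : Pairwise (Disjoint on Γ)) (hcard : ∀ δ, #(Γ δ) = r) (p : Om × De) :
    (gammaHat Γ p).ncard = Fintype.card Om ^ (Fintype.card Sg - r * Fintype.card De) *
        (Fintype.card Om ^ r - Fintype.card Om) ^ (Fintype.card De - 1) := by
  classical
  obtain ⟨ω, ε⟩ := p
  rw [gammaHat_eq_setOf_forall_restrict_mem, Set.ncard_setOf_forall_restrict_mem _ hdisj]
  have hnonconst : ∀ δ, {g : Γ δ → Om | ∃ x y, g x ≠ g y}.ncard =
      Fintype.card Om ^ r - Fintype.card Om := fun δ => by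
    have : Nonempty (Γ δ) := (card_pos.mp (hcard δ ▸ hr)).to_subtype
    simp only [Set.ncard_setOf_exists_ne, Nat.card_eq_fintype_card, Fintype.card_coe, hcard]
  simp only [hcard, sum_const, card_univ, smul_eq_mul, apply_ite Set.ncard, Set.ncard_singleton,
    hnonconst, Nat.card_eq_fintype_card]
  rw [prod_ite, prod_const_one, one_mul, prod_const, mul_comm r, filter_ne',
    card_erase_of_mem (mem_univ ε), card_univ]

end GammaHat

theorem Gammahat_disjoint_nonempty_card_general
    (Sg Om De : Type*) [Fintype Sg] [Fintype Om] [Fintype De]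
    (r : ℕ) (hr : 2 ≤ r)
    (Γ : De → Finset Sg)
    (hdisj : ∀ δ δ' : De, δ ≠ δ' → Disjoint (Γ δ) (Γ δ'))
    (hcard : ∀ δ, (Γ δ).card = r)
    (hOm : 2 ≤ Fintype.card Om)
    (Γhat : Om × De → Set (Sg → Om))
    (hΓhat : ∀ p, Γhat p = {f : Sg → Om |
      (∀ σ ∈ Γ p.2, f σ = p.1) ∧
      ∀ δ : De, δ ≠ p.2 → ∃ σ₁ ∈ Γ δ, ∃ σ₂ ∈ Γ δ, f σ₁ ≠ f σ₂}) :
    (∀ p q : Om × De, p ≠ q → Disjoint (Γhat p) (Γhat q)) ∧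
    (∀ p, (Γhat p).Nonempty) ∧
    (∀ p, (Γhat p).ncard =
      Fintype.card Om ^ (Fintype.card Sg - r * Fintype.card De) *
        (Fintype.card Om ^ r - Fintype.card Om) ^ (Fintype.card De - 1)) := by
  obtain rfl : Γhat = gammaHat Γ := funext hΓhat
  have hΓ : ∀ δ, (Γ δ).Nonempty := fun δ => card_pos.mp (by rw [hcard]; omega)
  have hcount := ncard_gammaHat (Om := Om) (by omega) (fun δ δ' => hdisj δ δ') hcard
  have hblock : Fintype.card Om < Fintype.card Om ^ r := lt_self_pow₀ (by omega) (by omega)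
  refine ⟨fun _ _ => disjoint_gammaHat hΓ, fun p => Set.nonempty_of_ncard_ne_zero ?_, hcount⟩
  rw [hcount]
  exact (Nat.mul_pos (pow_pos (by omega) _) (pow_pos (Nat.sub_pos_of_lt hblock) _)).ne'

/-- Let `Γ : Δ → P(Σ)` assign pairwise disjoint `r`-element subsets of `Σ` with `r ≥ 2`,
and assume `|Ω| ≥ 2`, `|Δ| ≥ 2`.  For `(ω, ε) ∈ Ω × Δ` let `Γ̂(ω, ε)` be the set of
functions `f : Σ → Ω` that are constant equal to `ω` on `Γ(ε)` and non-constant on `Γ(δ)`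
for every `δ ≠ ε`.  Then the sets `Γ̂(ω, ε)` are pairwise disjoint, nonempty, and each has
cardinality `|Ω|^(|Σ| - r|Δ|) * (|Ω|^r - |Ω|)^(|Δ| - 1)`. -/
theorem Gammahat_disjoint_nonempty_card
    (Sg Om De : Type*) [Fintype Sg] [Fintype Om] [Fintype De]
    [DecidableEq Sg] [DecidableEq Om] [DecidableEq De]
    (r : ℕ) (hr : 2 ≤ r)
    (Γ : De → Finset Sg)
    (hdisj : ∀ δ δ' : De, δ ≠ δ' → Disjoint (Γ δ) (Γ δ'))
    (hcard : ∀ δ, (Γ δ).card = r)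
    (hOm : 2 ≤ Fintype.card Om) (hDe : 2 ≤ Fintype.card De)
    (Γhat : Om × De → Set (Sg → Om))
    (hΓhat : ∀ p, Γhat p = {f : Sg → Om |
      (∀ σ ∈ Γ p.2, f σ = p.1) ∧
      ∀ δ : De, δ ≠ p.2 → ∃ σ₁ ∈ Γ δ, ∃ σ₂ ∈ Γ δ, f σ₁ ≠ f σ₂}) :
    (∀ p q : Om × De, p ≠ q → Disjoint (Γhat p) (Γhat q)) ∧
    (∀ p, (Γhat p).Nonempty) ∧
    (∀ p, (Γhat p).ncard =
      Fintype.card Om ^ (Fintype.card Sg - r * Fintype.card De) *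
        (Fintype.card Om ^ r - Fintype.card Om) ^ (Fintype.card De - 1)) :=
  Gammahat_disjoint_nonempty_card_general Sg Om De r hr Γ hdisj hcard hOm Γhat hΓhat
end

section
/- Let S ≤ Sym(Ω), H ≤ Sym(Δ), G ≤ Sym(Σ) be nontrivial finite permutation groups, and suppose H is P-embedded of degree r ≥ 2 in G via ι : H → H̃ ≤ G and Γ : Δ → Δ̃ ⊆ P_r(Σ) with pairwise disjoint images. Then the map ι' : S^Δ → S^Σ sending (s_δ)_{δ∈Δ} to (t_σ)_{σ∈Σ}, where t_σ = s_δ if σ ∈ Γ(δ) and t_σ = 1 otherwise, is an injective group homomorphism from the base group of the imprimitive wreath product S ≀ H into the base group of the product-action wreath product S ≀_pa G, and together with ι it extends to an injective group homomorphism ι̂ : S ≀ H → S ≀_pa G. -/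
/-- The coordinate-permuting action of `G` on the base group `Ω → S`,
used to form wreath products `(Ω → S) ⋊ G`. -/
def permAut (G : Type*) [Group G] (Ω : Type*) [MulAction G Ω] (S : Type*) [Group S] :
    G →* MulAut (Ω → S) where
  toFun g := MulEquiv.arrowCongr (MulAction.toPerm g) (MulEquiv.refl S)
  map_one' := by ext f σ; simp
  map_mul' g h := by ext f σ; simp [mul_smul]

/-- The wreath product of `S` by `G` (w.r.t. the action of `G` on `Ω`) as the semidirect
product `(Ω → S) ⋊ G`; for `G ≤ Sym(Δ)` and the imprimitive action this is `S ≀ G`, and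
for the product action on `Λ^Ω` this is the group underlying `S ≀_pa G`. -/
abbrev Wr (S : Type*) [Group S] (G : Type*) [Group G] (Ω : Type*) [MulAction G Ω] :=
  SemidirectProduct (Ω → S) G (permAut G Ω S)

/-- Let `S ≤ Sym(Ω)`, `H ≤ Sym(Δ)`, `G ≤ Sym(Σ)` be nontrivial finite permutation groups and
suppose `H` is P-embedded of degree `r ≥ 2` in `G` via `ι : H →* G` and
`Γ : Δ → P_r(Σ)` with pairwise disjoint images.  Then the map `ι' : S^Δ → S^Σ` defined by
`ι'((s_δ)_δ)_σ = s_δ` if `σ ∈ Γ(δ)` and `= 1` if `σ` lies in no `Γ(δ)` is an injective group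
homomorphism between the base groups, and together with `ι` it extends to an injective group
homomorphism `ι̂ : S ≀ H → S ≀_pa G`, `ι̂(b, h) = (ι' b, ι h)`. -/
theorem wreath_imprimitive_embeds_productAction
    (S : Type*) [Group S] [Finite S] [Nontrivial S]
    (H : Type*) [Group H] [Finite H] [Nontrivial H]
    (G : Type*) [Group G] [Finite G] [Nontrivial G]
    (Om De Sg : Type*) [Finite Om] [Finite De] [Finite Sg] [DecidableEq Sg]
    [MulAction S Om] [FaithfulSMul S Om] [MulAction H De] [FaithfulSMul H De]
    [MulAction G Sg] [FaithfulSMul G Sg]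
    (r : ℕ) (hr : 2 ≤ r)
    (ι : H →* G) (hι : Function.Injective ι)
    (Γ : De → Finset Sg)
    (hcard : ∀ δ, (Γ δ).card = r)
    (hdisj : ∀ δ δ' : De, δ ≠ δ' → Disjoint (Γ δ) (Γ δ'))
    (hequiv : ∀ (h : H) (δ : De), Γ (h • δ) = (Γ δ).image (fun σ => ι h • σ)) :
    ∃ ι' : (De → S) →* (Sg → S),
      (∀ (s : De → S) (δ : De) (σ : Sg), σ ∈ Γ δ → ι' s σ = s δ) ∧
      (∀ (s : De → S) (σ : Sg), (∀ δ, σ ∉ Γ δ) → ι' s σ = 1) ∧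
      Function.Injective ι' ∧
      ∃ ιhat : Wr S H De →* Wr S G Sg,
        Function.Injective ιhat ∧
        ∀ w : Wr S H De, ιhat w = ⟨ι' w.left, ι w.right⟩ := by
  classical
  have key : ∀ (σ : Sg) (δ : De), σ ∈ Γ δ → ∀ (h : ∃ δ', σ ∈ Γ δ'), h.choose = δ := by
    intro σ δ hσ h
    by_contra hne
    exact Finset.disjoint_left.mp (hdisj _ _ hne) h.choose_spec hσ
  set f : (De → S) → (Sg → S) := fun s σ => if h : ∃ δ, σ ∈ Γ δ then s h.choose else 1 with hf
  have hfmem : ∀ (s : De → S) (δ : De) (σ : Sg), σ ∈ Γ δ → f s σ = s δ := by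
    intro s δ σ hσ
    have hex : ∃ δ', σ ∈ Γ δ' := ⟨δ, hσ⟩
    simp only [hf, dif_pos hex, key σ δ hσ hex]
  have hfnot : ∀ (s : De → S) (σ : Sg), (∀ δ, σ ∉ Γ δ) → f s σ = 1 := by
    intro s σ hσ
    simp only [hf]
    rw [dif_neg]
    push_neg
    exact hσ
  have hmul : ∀ a b : De → S, f (a * b) = f a * f b := by
    intro a b
    funext σ
    by_cases h : ∃ δ, σ ∈ Γ δ <;> simp [hf, h]
  let ι' : (De → S) →* (Sg → S) := MonoidHom.mk' f hmul
  have hinj' : Function.Injective ι' := by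
    intro a b hab
    funext δ
    have hne : (Γ δ).Nonempty := by
      rw [← Finset.card_pos, hcard δ]; omega
    obtain ⟨σ, hσ⟩ := hne
    have := congrFun hab σ
    rwa [show ι' a σ = a δ from hfmem a δ σ hσ, show ι' b σ = b δ from hfmem b δ σ hσ] at this
  have hequiv' : ∀ (h : H) (b : De → S),
      f (permAut H De S h b) = permAut G Sg S (ι h) (f b) := by
    intro h b
    funext σ
    have hperm : ∀ (g : G) (τ : Sg), permAut G Sg S g (f b) τ = f b (g⁻¹ • τ) := by
      intro g τ; rfl
    have hperm' : permAut H De S h b = fun δ => b (h⁻¹ • δ) := rfl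
    rw [hperm, hperm']
    by_cases hex : ∃ δ, σ ∈ Γ δ
    · obtain ⟨δ, hσ⟩ := hex
      have h1 : (ι h)⁻¹ • σ ∈ Γ (h⁻¹ • δ) := by
        rw [hequiv h⁻¹ δ, Finset.mem_image]
        exact ⟨σ, hσ, by rw [map_inv]⟩
      exact (hfmem (fun δ' => b (h⁻¹ • δ')) δ σ hσ).trans (hfmem b (h⁻¹ • δ) _ h1).symm
    · push_neg at hex
      have h2 : ∀ δ, (ι h)⁻¹ • σ ∉ Γ δ := by
        intro δ hmem
        apply hex (h • δ)
        rw [hequiv h δ, Finset.mem_image]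
        exact ⟨(ι h)⁻¹ • σ, hmem, by simp⟩
      exact (hfnot (fun δ' => b (h⁻¹ • δ')) σ hex).trans (hfnot b _ h2).symm
  refine ⟨ι', hfmem, hfnot, hinj', ?_⟩
  refine ⟨{ toFun := fun w => ⟨ι' w.left, ι w.right⟩,
            map_one' := by
              ext <;> simp
            map_mul' := by
              intro a b
              refine SemidirectProduct.ext ?_ ?_
              · show f (a.left * permAut H De S a.right b.left)
                    = f a.left * permAut G Sg S (ι a.right) (f b.left)
                rw [hmul, hequiv' a.right b.left]
              · show ι (a.right * b.right) = ι a.right * ι b.right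
                exact map_mul ι _ _ }, ?_, fun w => rfl⟩
  intro a b hab
  have h1 : ι' a.left = ι' b.left := congrArg SemidirectProduct.left hab
  have h2 : ι a.right = ι b.right := congrArg SemidirectProduct.right hab
  exact SemidirectProduct.ext (hinj' h1) (hι h2)
end

section
/- Let H ≤ Sym(Δ), G ≤ Sym(Σ), S ≤ Sym(Ω) be nontrivial finite permutation groups and suppose H is P-embedded of degree r ≥ 2 in G via (ι, Γ). Define Γ̂ : Ω × Δ → P(Ω^Σ) by letting Γ̂(ω, ε) be the set of f : Σ → Ω that are constant equal to ω on Γ(ε) and non-constant on every Γ(δ) with δ ≠ ε. Then for all (s_δ)_δ in the base group S^Δ and all h ∈ H: Γ̂((ω,ε)^{(s_δ)_δ}) = Γ̂(ω,ε)^{ι'((s_δ)_δ)} and Γ̂((ω,ε)^h) = Γ̂(ω,ε)^{ι(h)}, where ι' is the base-group embedding supported on ∪_δ Γ(δ). Consequently the imprimitive wreath product S ≀ H is P-embedded of degree r̂ = |Ω|^{|Σ|-r|Δ|}(|Ω|^r - |Ω|)^{|Δ|-1} in the product-action wreath product S ≀_pa G. -/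
/-- The product action of `S ≀_pa G = (Σ → S) ⋊ G` on `Ω^Σ`:
`(w • f)(τ) = w.left τ • f (w.right⁻¹ • τ)`. -/
def paSmul {S G Sg Om : Type*} [Group S] [Group G] [MulAction G Sg] [MulAction S Om]
    (w : Wr S G Sg) (f : Sg → Om) : Sg → Om :=
  fun τ => w.left τ • f (w.right⁻¹ • τ)

/-- The imprimitive action of `S ≀ H = (Δ → S) ⋊ H` on `Ω × Δ`:
`w • (ω, ε) = (w.left (w.right • ε) • ω, w.right • ε)`. -/
def iaSmul {S H De Om : Type*} [Group S] [Group H] [MulAction H De] [MulAction S Om]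
    (w : Wr S H De) (p : Om × De) : Om × De :=
  (w.left (w.right • p.2) • p.1, w.right • p.2)

lemma permAut_apply {G : Type*} [Group G] {Ω : Type*} [MulAction G Ω] {S : Type*} [Group S]
    (g : G) (b : Ω → S) (δ : Ω) : permAut G Ω S g b δ = b (g⁻¹ • δ) := rfl

lemma paSmul_one {S G Sg Om : Type*} [Group S] [Group G] [MulAction G Sg] [MulAction S Om]
    (f : Sg → Om) : paSmul (1 : Wr S G Sg) f = f := by
  funext τ; simp [paSmul]

lemma paSmul_mul {S G Sg Om : Type*} [Group S] [Group G] [MulAction G Sg] [MulAction S Om]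
    (w w' : Wr S G Sg) (f : Sg → Om) :
    paSmul (w * w') f = paSmul w (paSmul w' f) := by
  funext τ
  simp [paSmul, permAut_apply, mul_smul]

lemma iaSmul_one {S H De Om : Type*} [Group S] [Group H] [MulAction H De] [MulAction S Om]
    (p : Om × De) : iaSmul (1 : Wr S H De) p = p := by
  simp [iaSmul]

lemma iaSmul_mul {S H De Om : Type*} [Group S] [Group H] [MulAction H De] [MulAction S Om]
    (w w' : Wr S H De) (p : Om × De) :
    iaSmul (w * w') p = iaSmul w (iaSmul w' p) := by
  simp [iaSmul, permAut_apply, mul_smul]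

/-- Counting the members of `Γ̂(ω, ε)`. -/
lemma wr_card_aux {Om Sg De : Type*} [Fintype Om] [Fintype Sg] [Fintype De] [DecidableEq Sg]
    (r : ℕ) (hr : 1 ≤ r) (Γ : De → Finset Sg)
    (hcard : ∀ δ, (Γ δ).card = r)
    (hdisj : ∀ δ δ' : De, δ ≠ δ' → Disjoint (Γ δ) (Γ δ'))
    (ω : Om) (ε : De) :
    Nat.card {f : Sg → Om // (∀ σ ∈ Γ ε, f σ = ω) ∧
      ∀ δ : De, δ ≠ ε → ∃ σ₁ ∈ Γ δ, ∃ σ₂ ∈ Γ δ, f σ₁ ≠ f σ₂}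
    = Fintype.card Om ^ (Fintype.card Sg - r * Fintype.card De) *
        (Fintype.card Om ^ r - Fintype.card Om) ^ (Fintype.card De - 1) := by
  classical
  have huniq : ∀ {σ : Sg} {δ δ' : De}, σ ∈ Γ δ → σ ∈ Γ δ' → δ = δ' := by
    intro σ δ δ' h1 h2
    by_contra hne
    exact (hdisj δ δ' hne).forall_ne_finset h1 h2 rfl
  have hΓne : ∀ δ, (Γ δ).Nonempty := fun δ => Finset.card_pos.mp (by rw [hcard]; omega)
  set T := ({σ : Sg // ∀ δ, σ ∉ Γ δ} → Om) ×
      ((δ : {δ : De // δ ≠ ε}) → {g : {x : Sg // x ∈ Γ δ.1} → Om //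
        ∃ x y, g x ≠ g y}) with hT
  set F : T → Sg → Om := fun gh σ =>
    if hσ : ∃ δ, σ ∈ Γ δ then
      (if he : hσ.choose = ε then ω else
        (gh.2 ⟨hσ.choose, he⟩).1 ⟨σ, hσ.choose_spec⟩)
    else gh.1 ⟨σ, by push_neg at hσ; exact hσ⟩ with hFdef
  have hF_mem : ∀ (gh : T) (σ : Sg) (δ : De) (h : σ ∈ Γ δ), F gh σ =
      if he : δ = ε then ω else (gh.2 ⟨δ, he⟩).1 ⟨σ, h⟩ := by
    intro gh σ δ h
    have hσ : ∃ δ, σ ∈ Γ δ := ⟨δ, h⟩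
    have hc : hσ.choose = δ := huniq hσ.choose_spec h
    simp only [hFdef]
    rw [dif_pos hσ]
    subst hc
    rfl
  have hF_out : ∀ (gh : T) (σ : Sg) (h : ∀ δ, σ ∉ Γ δ), F gh σ = gh.1 ⟨σ, h⟩ := by
    intro gh σ h
    simp only [hFdef]
    rw [dif_neg (by push_neg; exact h)]
  have e : {f : Sg → Om // (∀ σ ∈ Γ ε, f σ = ω) ∧
      ∀ δ : De, δ ≠ ε → ∃ σ₁ ∈ Γ δ, ∃ σ₂ ∈ Γ δ, f σ₁ ≠ f σ₂} ≃ T := by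
    refine
      { toFun := fun f => ⟨fun σ => f.1 σ.1, fun δ => ⟨fun x => f.1 x.1, ?_⟩⟩
        invFun := fun gh => ⟨F gh, ?_, ?_⟩
        left_inv := ?_
        right_inv := ?_ }
    · obtain ⟨σ₁, h₁, σ₂, h₂, hne'⟩ := f.2.2 δ.1 δ.2
      exact ⟨⟨σ₁, h₁⟩, ⟨σ₂, h₂⟩, hne'⟩
    · intro σ hσε
      rw [hF_mem gh σ ε hσε, dif_pos rfl]
    · intro δ hδ
      obtain ⟨⟨x, hx⟩, ⟨y, hy⟩, hxy⟩ := (gh.2 ⟨δ, hδ⟩).2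
      refine ⟨x, hx, y, hy, ?_⟩
      rw [hF_mem gh x δ hx, hF_mem gh y δ hy, dif_neg hδ, dif_neg hδ]
      exact hxy
    · rintro ⟨f, hfε, hfnc⟩
      ext σ
      show F _ σ = f σ
      by_cases hσ : ∃ δ, σ ∈ Γ δ
      · obtain ⟨δ, hδ⟩ := hσ
        rw [hF_mem _ σ δ hδ]
        by_cases he : δ = ε
        · subst he; rw [dif_pos rfl]; exact (hfε σ hδ).symm
        · rw [dif_neg he]
      · push_neg at hσ
        rw [hF_out _ σ hσ]
    · rintro ⟨h, g⟩
      refine Prod.ext ?_ ?_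
      · funext σ
        exact hF_out ⟨h, g⟩ σ.1 σ.2
      · funext δ
        apply Subtype.ext
        funext x
        show F ⟨h, g⟩ x.1 = _
        rw [hF_mem ⟨h, g⟩ x.1 δ.1 x.2, dif_neg δ.2]
  rw [Nat.card_congr e, hT, Nat.card_prod]
  have c1 : Nat.card ({σ : Sg // ∀ δ, σ ∉ Γ δ} → Om)
      = Fintype.card Om ^ (Fintype.card Sg - r * Fintype.card De) := by
    rw [Nat.card_eq_fintype_card, Fintype.card_fun]
    congr 1
    have e1 : {σ : Sg // ∀ δ, σ ∉ Γ δ} ≃ {σ : Sg // ¬ ∃ δ, σ ∈ Γ δ} :=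
      Equiv.subtypeEquivRight (by intro σ; push_neg; rfl)
    have e2 : {σ : Sg // ∃ δ, σ ∈ Γ δ} ≃ {σ : Sg // σ ∈ Finset.univ.biUnion Γ} :=
      Equiv.subtypeEquivRight (by intro σ; simp [Finset.mem_biUnion])
    rw [Fintype.card_congr e1, Fintype.card_subtype_compl, Fintype.card_congr e2]
    congr 1
    rw [Fintype.card_coe, Finset.card_biUnion (fun δ _ δ' _ h => hdisj δ δ' h)]
    simp [hcard, mul_comm]
  have cNC : ∀ δ : De, Nat.card {g : {x : Sg // x ∈ Γ δ} → Om // ∃ x y, g x ≠ g y}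
      = Fintype.card Om ^ r - Fintype.card Om := by
    intro δ
    obtain ⟨x₀, hx₀⟩ := hΓne δ
    have e1 : {g : {x : Sg // x ∈ Γ δ} → Om // ∃ x y, g x ≠ g y}
        ≃ {g : {x : Sg // x ∈ Γ δ} → Om // ¬ ∀ x y, g x = g y} :=
      Equiv.subtypeEquivRight (by intro g; push_neg; rfl)
    have e2 : {g : {x : Sg // x ∈ Γ δ} → Om // ∀ x y, g x = g y} ≃ Om :=
      { toFun := fun g => g.1 ⟨x₀, hx₀⟩
        invFun := fun ω' => ⟨fun _ => ω', fun _ _ => rfl⟩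
        left_inv := by rintro ⟨g, hg⟩; apply Subtype.ext; funext x; exact hg _ x
        right_inv := fun ω' => rfl }
    rw [Nat.card_eq_fintype_card, Fintype.card_congr e1, Fintype.card_subtype_compl,
      Fintype.card_congr e2, Fintype.card_fun, Fintype.card_coe, hcard]
  have c2 : Nat.card ((δ : {δ : De // δ ≠ ε}) → {g : {x : Sg // x ∈ Γ δ.1} → Om //
      ∃ x y, g x ≠ g y}) = (Fintype.card Om ^ r - Fintype.card Om) ^ (Fintype.card De - 1) := by
    rw [Nat.card_pi]
    rw [Finset.prod_congr rfl (fun δ _ => cNC δ.1), Finset.prod_const, Finset.card_univ]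
    congr 1
    rw [Fintype.card_subtype_compl, Fintype.card_subtype_eq]
  rw [c1, c2]

/-- Let `H ≤ Sym(Δ)`, `G ≤ Sym(Σ)`, `S ≤ Sym(Ω)` be nontrivial finite permutation groups,
with `H` P-embedded of degree `r ≥ 2` in `G` via `(ι, Γ)`.  Let `Γ̂(ω, ε)` be the set of
`f : Σ → Ω` constant equal to `ω` on `Γ(ε)` and non-constant on every `Γ(δ)`, `δ ≠ ε`, and
let `ι'` be the base-group embedding supported on `⋃ δ, Γ(δ)`.  Then `Γ̂` is equivariant for
base and top elements, and consequently `S ≀ H` is P-embedded of degree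
`r̂ = |Ω|^{|Σ|-r|Δ|}(|Ω|^r - |Ω|)^{|Δ|-1}` in `S ≀_pa G`. -/
theorem wreath_P_embedding
    (S : Type*) [Group S] [Finite S] [Nontrivial S]
    (H : Type*) [Group H] [Finite H] [Nontrivial H]
    (G : Type*) [Group G] [Finite G] [Nontrivial G]
    (Om De Sg : Type*) [Fintype Om] [Fintype De] [Fintype Sg] [DecidableEq Sg]
    [MulAction S Om] [FaithfulSMul S Om] [MulAction H De] [FaithfulSMul H De]
    [MulAction G Sg] [FaithfulSMul G Sg]
    (r : ℕ) (hr : 2 ≤ r)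
    (ι : H →* G) (hι : Function.Injective ι)
    (Γ : De → Finset Sg)
    (hcard : ∀ δ, (Γ δ).card = r)
    (hdisj : ∀ δ δ' : De, δ ≠ δ' → Disjoint (Γ δ) (Γ δ'))
    (hequiv : ∀ (h : H) (δ : De), Γ (h • δ) = (Γ δ).image (fun σ => ι h • σ))
    -- the base-group embedding `ι' : S^Δ →* S^Σ` supported on `⋃ δ, Γ δ`
    (ι' : (De → S) →* (Sg → S))
    (hι'supp : ∀ (s : De → S) (δ : De) (σ : Sg), σ ∈ Γ δ → ι' s σ = s δ)
    (hι'out : ∀ (s : De → S) (σ : Sg), (∀ δ, σ ∉ Γ δ) → ι' s σ = 1)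
    -- `Γ̂ : Ω × Δ → P(Ω^Σ)`
    (Γhat : Om × De → Set (Sg → Om))
    (hΓhat : ∀ p, Γhat p = {f : Sg → Om |
      (∀ σ ∈ Γ p.2, f σ = p.1) ∧
      ∀ δ : De, δ ≠ p.2 → ∃ σ₁ ∈ Γ δ, ∃ σ₂ ∈ Γ δ, f σ₁ ≠ f σ₂}) :
    -- equivariance for base-group elements
    (∀ (s : De → S) (p : Om × De),
      Γhat (iaSmul (⟨s, 1⟩ : Wr S H De) p)
        = paSmul (⟨ι' s, 1⟩ : Wr S G Sg) '' Γhat p) ∧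
    -- equivariance for top-group elements
    (∀ (h : H) (p : Om × De),
      Γhat (iaSmul (⟨1, h⟩ : Wr S H De) p)
        = paSmul (⟨1, ι h⟩ : Wr S G Sg) '' Γhat p) ∧
    -- consequently: a P-embedding of `S ≀ H` into `S ≀_pa G` of degree `r̂`
    ∃ ιhat : Wr S H De →* Wr S G Sg,
      Function.Injective ιhat ∧
      (∀ w : Wr S H De, ιhat w = ⟨ι' w.left, ι w.right⟩) ∧
      Function.Injective Γhat ∧
      (∀ p q : Om × De, p ≠ q → Disjoint (Γhat p) (Γhat q)) ∧
      (∀ p, (Γhat p).ncard =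
        Fintype.card Om ^ (Fintype.card Sg - r * Fintype.card De) *
          (Fintype.card Om ^ r - Fintype.card Om) ^ (Fintype.card De - 1)) ∧
      ∀ (w : Wr S H De) (p : Om × De),
        Γhat (iaSmul w p) = paSmul (ιhat w) '' Γhat p := by
  classical
  have huniq : ∀ {σ : Sg} {δ δ' : De}, σ ∈ Γ δ → σ ∈ Γ δ' → δ = δ' := by
    intro σ δ δ' h1 h2
    by_contra hne
    exact (hdisj δ δ' hne).forall_ne_finset h1 h2 rfl
  have hΓne : ∀ δ, (Γ δ).Nonempty := fun δ => Finset.card_pos.mp (by rw [hcard]; omega)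
  -- equivariance of the blocks
  have hmem_smul : ∀ (g : H) (δ : De) (σ : Sg), σ ∈ Γ δ → ι g • σ ∈ Γ (g • δ) := by
    intro g δ σ h
    rw [hequiv]
    exact Finset.mem_image_of_mem _ h
  have hmem_smul_inv : ∀ (g : H) (δ : De) (σ : Sg), σ ∈ Γ (g • δ) → (ι g)⁻¹ • σ ∈ Γ δ := by
    intro g δ σ h
    rw [hequiv] at h
    obtain ⟨σ', hσ', rfl⟩ := Finset.mem_image.mp h
    rwa [inv_smul_smul]
  -- the twisting identity for ι'
  have hι'twist : ∀ (b : De → S) (g : H) (σ : Sg),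
      ι' (permAut H De S g b) σ = ι' b ((ι g)⁻¹ • σ) := by
    intro b g σ
    by_cases hσ : ∃ δ, σ ∈ Γ δ
    · obtain ⟨δ, hδ⟩ := hσ
      have h1 : (ι g)⁻¹ • σ ∈ Γ (g⁻¹ • δ) := by
        apply hmem_smul_inv
        rwa [smul_inv_smul]
      rw [hι'supp _ δ σ hδ, hι'supp _ _ _ h1, permAut_apply]
    · push_neg at hσ
      have h1 : ∀ δ, (ι g)⁻¹ • σ ∉ Γ δ := by
        intro δ hδ
        have := hmem_smul g δ _ hδ
        rw [smul_inv_smul] at this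
        exact hσ _ this
      rw [hι'out _ _ hσ, hι'out _ _ h1]
  -- the embedding
  let ιhat : Wr S H De →* Wr S G Sg :=
    { toFun := fun w => ⟨ι' w.left, ι w.right⟩
      map_one' := by
        refine SemidirectProduct.ext ?_ ?_ <;>
          simp [SemidirectProduct.one_left, SemidirectProduct.one_right]
      map_mul' := by
        intro w w'
        refine SemidirectProduct.ext ?_ ?_
        · show ι' (w * w').left = _
          rw [SemidirectProduct.mul_left, SemidirectProduct.mul_left, map_mul]
          funext σ
          rw [Pi.mul_apply, Pi.mul_apply, hι'twist, permAut_apply]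
        · show ι (w * w').right = _
          rw [SemidirectProduct.mul_right, SemidirectProduct.mul_right, map_mul] }
  have hιhat_apply : ∀ w : Wr S H De, ιhat w = ⟨ι' w.left, ι w.right⟩ := fun _ => rfl
  have hι'inj : Function.Injective ι' := by
    intro a b hab
    funext δ
    obtain ⟨σ, hσ⟩ := hΓne δ
    have := congrFun hab σ
    rwa [hι'supp a δ σ hσ, hι'supp b δ σ hσ] at this
  have hιhat_inj : Function.Injective ιhat := by
    intro w w' h
    rw [hιhat_apply, hιhat_apply] at h
    refine SemidirectProduct.ext ?_ ?_
    · exact hι'inj (congrArg SemidirectProduct.left h)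
    · exact hι (congrArg SemidirectProduct.right h)
  -- the key one-directional equivariance
  have key : ∀ (w : Wr S H De) (p : Om × De) (f : Sg → Om),
      f ∈ Γhat p → paSmul (ιhat w) f ∈ Γhat (iaSmul w p) := by
    rintro w ⟨ω, ε⟩ f hf
    rw [hΓhat] at hf ⊢
    obtain ⟨hf1, hf2⟩ := hf
    rw [hιhat_apply]
    simp only [iaSmul]
    constructor
    · intro σ hσ
      show ι' w.left σ • f ((ι w.right)⁻¹ • σ) = w.left (w.right • ε) • ω
      rw [hι'supp _ _ _ hσ, hf1 _ (hmem_smul_inv _ _ _ hσ)]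
    · intro δ hδ
      have hδ' : w.right⁻¹ • δ ≠ ε := by
        intro h
        apply hδ
        rw [← h, smul_inv_smul]
      obtain ⟨σ₁, h₁, σ₂, h₂, hne12⟩ := hf2 _ hδ'
      have hm : ∀ σ, σ ∈ Γ (w.right⁻¹ • δ) → ι w.right • σ ∈ Γ δ := by
        intro σ hσ
        have := hmem_smul w.right _ _ hσ
        rwa [smul_inv_smul] at this
      refine ⟨ι w.right • σ₁, hm _ h₁, ι w.right • σ₂, hm _ h₂, ?_⟩
      show ι' w.left _ • f ((ι w.right)⁻¹ • ι w.right • σ₁) ≠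
        ι' w.left _ • f ((ι w.right)⁻¹ • ι w.right • σ₂)
      rw [hι'supp _ δ _ (hm _ h₁), hι'supp _ δ _ (hm _ h₂), inv_smul_smul, inv_smul_smul]
      intro h
      exact hne12 (smul_left_cancel _ h)
  -- the general equivariance (as set equality)
  have hgen : ∀ (w : Wr S H De) (p : Om × De),
      Γhat (iaSmul w p) = paSmul (ιhat w) '' Γhat p := by
    intro w p
    ext f'
    constructor
    · intro hf'
      refine ⟨paSmul (ιhat w⁻¹) f', ?_, ?_⟩
      · have := key w⁻¹ (iaSmul w p) f' hf'
        rwa [← iaSmul_mul, inv_mul_cancel, iaSmul_one] at this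
      · rw [← paSmul_mul, ← map_mul, mul_inv_cancel, map_one, paSmul_one]
    · rintro ⟨f, hf, rfl⟩
      exact key w p f hf
  -- nontriviality of Om
  obtain ⟨s₀, hs₀⟩ := exists_ne (1 : S)
  have : ¬ ∀ ω : Om, s₀ • ω = (1 : S) • ω := fun h => hs₀ (eq_of_smul_eq_smul h)
  push_neg at this
  obtain ⟨ωd, hωd⟩ := this
  rw [one_smul] at hωd
  set ω₀ : Om := s₀ • ωd with hω₀
  set ω₁ : Om := ωd with hω₁
  have hω01 : ω₀ ≠ ω₁ := hωd
  -- nonemptiness of Γhat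
  have hnonempty : ∀ p : Om × De, (Γhat p).Nonempty := by
    rintro ⟨ω, ε⟩
    set c : De → Sg := fun δ => (hΓne δ).choose with hc
    have hcmem : ∀ δ, c δ ∈ Γ δ := fun δ => (hΓne δ).choose_spec
    set f : Sg → Om := fun σ =>
      if hσ : ∃ δ, σ ∈ Γ δ then
        (if hσ.choose = ε then ω else (if σ = c hσ.choose then ω₀ else ω₁))
      else ω₁ with hfdef
    have hfval : ∀ (σ : Sg) (δ : De), σ ∈ Γ δ →
        f σ = if δ = ε then ω else (if σ = c δ then ω₀ else ω₁) := by
      intro σ δ h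
      have hσ : ∃ δ, σ ∈ Γ δ := ⟨δ, h⟩
      have hch : hσ.choose = δ := huniq hσ.choose_spec h
      simp only [hfdef]
      rw [dif_pos hσ, hch]
    refine ⟨f, ?_⟩
    rw [hΓhat]
    constructor
    · intro σ hσ
      rw [hfval σ ε hσ, if_pos rfl]
    · intro δ hδ
      have h1lt : 1 < (Γ δ).card := by rw [hcard δ]; omega
      obtain ⟨d, hd, hdc⟩ := Finset.exists_mem_ne h1lt (c δ)
      refine ⟨c δ, hcmem δ, d, hd, ?_⟩
      rw [hfval _ δ (hcmem δ), hfval _ δ hd, if_neg hδ, if_neg hδ, if_pos rfl, if_neg hdc]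
      exact hω01
  -- disjointness
  have hdisjhat : ∀ p q : Om × De, p ≠ q → Disjoint (Γhat p) (Γhat q) := by
    rintro ⟨ω, ε⟩ ⟨ω', ε'⟩ hpq
    rw [Set.disjoint_left]
    intro f hfp hfq
    rw [hΓhat] at hfp hfq
    by_cases he : ε = ε'
    · subst he
      obtain ⟨σ, hσ⟩ := hΓne ε
      have h1 : f σ = ω := hfp.1 σ hσ
      have h2 : f σ = ω' := hfq.1 σ hσ
      exact hpq (by rw [Prod.ext_iff]; exact ⟨h1 ▸ h2 ▸ rfl, rfl⟩)
    · obtain ⟨σ₁, h₁, σ₂, h₂, hne12⟩ := hfp.2 ε' (fun h => he h.symm)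
      exact hne12 ((hfq.1 σ₁ h₁).trans (hfq.1 σ₂ h₂).symm)
  -- injectivity of Γhat
  have hΓhat_inj : Function.Injective Γhat := by
    intro p q h
    by_contra hpq
    obtain ⟨f, hf⟩ := hnonempty p
    exact Set.disjoint_left.mp (hdisjhat p q hpq) hf (h ▸ hf)
  -- cardinality
  have hcardΓ : ∀ p : Om × De, (Γhat p).ncard =
      Fintype.card Om ^ (Fintype.card Sg - r * Fintype.card De) *
        (Fintype.card Om ^ r - Fintype.card Om) ^ (Fintype.card De - 1) := by
    intro p
    rw [hΓhat, ← Nat.card_coe_set_eq]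
    exact wr_card_aux r (le_trans one_le_two hr) Γ hcard hdisj p.1 p.2
  refine ⟨?_, ?_, ιhat, hιhat_inj, hιhat_apply, hΓhat_inj, hdisjhat, hcardΓ, hgen⟩
  · intro s p
    have h1 : (⟨ι' s, 1⟩ : Wr S G Sg) = ιhat ⟨s, 1⟩ := by
      rw [hιhat_apply]
      exact SemidirectProduct.ext rfl (map_one ι).symm
    rw [h1]
    exact hgen ⟨s, 1⟩ p
  · intro h p
    have h1 : (⟨1, ι h⟩ : Wr S G Sg) = ιhat ⟨1, h⟩ := by
      rw [hιhat_apply]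
      exact SemidirectProduct.ext (map_one ι').symm rfl
    rw [h1]
    exact hgen ⟨1, h⟩ p
end
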